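/- Let M be a rank-2 symmetric matroid on [2n]. Then the symplectic projection π(M) has empty set of bases if and only if B(M) = {{i, i*}} for a single i ∈ [n]. -/
import Mathlib


/-- The star involution on `E_n = [2n]`, `i* = 2n - 1 - i` (0-indexed). -/
def nstar (n : ℕ) (i : Fin (2*n)) : Fin (2*n) :=
  ⟨2*n - 1 - (i : ℕ), by have h := i.isLt; omega⟩

lemma nstar_nstar (n : ℕ) (i : Fin (2*n)) : nstar n (nstar n i) = i := by
  have := i.isLt; simp only [nstar]; ext; simp; omega

lemma nstar_ne (n : ℕ) (i : Fin (2*n)) : nstar n i ≠ i := by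
  have := i.isLt
  intro h
  have := congrArg Fin.val h
  simp [nstar] at this
  omega

lemma nstar_inj (n : ℕ) {i j : Fin (2*n)} (h : nstar n i = nstar n j) : i = j := by
  have hi := i.isLt; have hj := j.isLt
  have := congrArg Fin.val h
  simp [nstar] at this
  ext; omega

lemma finset_pair_eq {α : Type*} [DecidableEq α] {a b c d : α} :
    ({a, b} : Finset α) = {c, d} ↔ a = c ∧ b = d ∨ a = d ∧ b = c := by
  rw [← Finset.coe_inj]
  simp only [Finset.coe_insert, Finset.coe_singleton]
  exact Set.pair_eq_pair_iff

/-- For a rank-2 symmetric matroid `M` on `[2n]` given by a non-intersecting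
family `P_1, …, P_l` (bases `{i,j}` = partial 2-transversals, i.e. `i, j` in
different bags), the symplectic projection `π(M)` has empty set of bases if and
only if `B(M) = {{i, i*}}` consists of a single diagonal pair. -/
theorem projection_empty_iff (n l : ℕ) (hl : 2 ≤ l)
    (P : Fin l → Finset (Fin (2*n)))
    (hne : ∀ a, (P a).Nonempty)
    (hdisj : ∀ a b, a ≠ b → Disjoint (P a) (P b)) :
    (∀ i j : Fin (2*n), i ≠ j → j ≠ nstar n i →
      ¬ ∃ a b, a ≠ b ∧ i ∈ P a ∧ j ∈ P b) ↔
    (∃ i : Fin (2*n), ∀ k m : Fin (2*n), k ≠ m →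
      ((∃ a b, a ≠ b ∧ k ∈ P a ∧ m ∈ P b) ↔
        ({k, m} : Finset (Fin (2*n))) = ({i, nstar n i} : Finset (Fin (2*n))))) := by
  constructor
  · intro H
    -- pick elements of two distinct bags
    have h0 : (0 : ℕ) < l := by omega
    have h1 : (1 : ℕ) < l := by omega
    set a0 : Fin l := ⟨0, h0⟩
    set b0 : Fin l := ⟨1, h1⟩
    have hab : a0 ≠ b0 := by simp [a0, b0, Fin.ext_iff]
    obtain ⟨x, hx⟩ := hne a0
    obtain ⟨y, hy⟩ := hne b0
    have hxy : x ≠ y := by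
      intro h; subst h
      have := (hdisj a0 b0 hab).le_bot (by simp [hx, hy] : x ∈ P a0 ⊓ P b0)
      simp at this
    have hyx : y = nstar n x := by
      by_contra h
      exact H x y hxy h ⟨a0, b0, hab, hx, hy⟩
    subst hyx
    refine ⟨x, fun k m hkm => ?_⟩
    constructor
    · rintro ⟨a, b, hne', hka, hmb⟩
      -- m must be nstar k
      have hm : m = nstar n k := by
        by_contra h
        exact H k m hkm h ⟨a, b, hne', hka, hmb⟩
      subst hm
      -- show k = x or k = nstar x
      have hk : k = x ∨ k = nstar n x := by
        by_contra h
        push_neg at h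
        obtain ⟨hk1, hk2⟩ := h
        -- {k, x} would be a basis if a ≠ a0
        have hxk : x ≠ nstar n k := by
          intro h
          apply hk2
          rw [h, nstar_nstar]
        have h1' : a = a0 := by
          by_contra h
          exact H k x (fun h' => hk1 h') hxk ⟨a, a0, h, hka, hx⟩
        have hxk' : nstar n x ≠ nstar n k := fun h => hk1 (nstar_inj n h).symm
        have hk3 : k ≠ nstar n x := hk2
        have h2' : a = b0 := by
          by_contra h
          exact H k (nstar n x) hk3 hxk' ⟨a, b0, h, hka, hy⟩
        exact hab (h1'.symm.trans h2')
      rcases hk with hk | hk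
      · subst hk; rfl
      · subst hk
        rw [nstar_nstar]
        rw [finset_pair_eq]
        right; exact ⟨rfl, rfl⟩
    · intro h
      rw [finset_pair_eq] at h
      rcases h with ⟨h1', h2'⟩ | ⟨h1', h2'⟩
      · subst h1'; subst h2'; exact ⟨a0, b0, hab, hx, hy⟩
      · subst h1'; subst h2'; exact ⟨b0, a0, hab.symm, hy, hx⟩
  · rintro ⟨i, hi⟩ k m hkm hmk ⟨a, b, hne', hka, hmb⟩
    have h := (hi k m hkm).mp ⟨a, b, hne', hka, hmb⟩
    rw [finset_pair_eq] at h
    rcases h with ⟨h1', h2'⟩ | ⟨h1', h2'⟩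
    · exact hmk (h2'.trans (by rw [h1']))
    · apply hmk
      rw [h2', h1', nstar_nstar]
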